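/- arXiv:0705.4561 — 4 statements merged into one kernel-verified Lean document; each statement's English description precedes it below -/
import Mathlib

section
/- Let P : ℝ^d → Mat_N(ℂ) be a smooth matrix-valued function all of whose derivatives are bounded. Then λ ∈ Σ_∞(P) if and only if λ is a limit of eigenvalues of P at infinity, i.e., there exist a sequence w_j ∈ ℝ^d with |w_j| → ∞ and complex numbers μ_j with det(P(w_j) − μ_j I) = 0 for every j and μ_j → λ as j → ∞. -/
/-
If `u` is a unit vector, `adj (A - λ) (A - λ) u = det (A - λ) u` gives
`|det (A - λ)| ≤ ‖adj (A - λ)‖ ‖(A - λ) u‖`, and `|det (A - λ)| = ∏ |μₖ - λ|` over the eigenvalues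
of `A` is at least `dist (λ, spec A) ^ N`. Since `P` is bounded, its values lie in a compact set of
matrices, on which the continuous map `A ↦ adj (A - λ)` is bounded; hence a vanishing residual
along `w j` forces eigenvalues of `P (w j)` to converge to `λ`. Conversely, eigenvectors for
eigenvalues `μⱼ → λ` have residual `|μⱼ - λ|`.
-/

open Filter Topology

/-- `Σ_∞(P)`: the set of `λ ∈ ℂ` for which there exist `w_j ∈ ℝ^d` with `|w_j| → ∞`
and nonzero `u_j ∈ ℂ^N` with `|P(w_j)u_j − λu_j|/|u_j| → 0` as `j → ∞`. -/
def SigmaInf {d N : ℕ} (P : EuclideanSpace ℝ (Fin d) → Matrix (Fin N) (Fin N) ℂ) : Set ℂ :=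
  {z : ℂ | ∃ (w : ℕ → EuclideanSpace ℝ (Fin d)) (u : ℕ → EuclideanSpace ℂ (Fin N)),
    (∀ j, u j ≠ 0) ∧
    Tendsto (fun j => ‖w j‖) atTop atTop ∧
    Tendsto (fun j => ‖Matrix.toEuclideanLin (P (w j)) (u j) - z • u j‖ / ‖u j‖)
      atTop (nhds 0)}

open Polynomial Matrix

theorem Polynomial.Monic.exists_isRoot_norm_sub_pow_natDegree_le {p : ℂ[X]} (hp : p.Monic)
    (hdeg : p.natDegree ≠ 0) (z : ℂ) :
    ∃ r, p.IsRoot r ∧ ‖z - r‖ ^ p.natDegree ≤ ‖p.eval z‖ := by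
  have hsplit := IsAlgClosed.splits p
  have hroots : p.roots ≠ 0 := by
    intro h
    exact hdeg (by simpa [h] using hsplit.natDegree_eq_card_roots)
  obtain ⟨r, hr, hmin⟩ := Multiset.exists_min_image (fun x => ‖z - x‖) hroots
  refine ⟨r, (mem_roots hp.ne_zero).mp hr, ?_⟩
  have hnorm : ‖p.eval z‖ = (p.roots.map fun x => ‖z - x‖).prod := by
    rw [hsplit.eval_eq_prod_roots_of_monic hp, ← normHom_apply, map_multiset_prod,
      Multiset.map_map]
    rfl
  calc ‖z - r‖ ^ p.natDegree = (p.roots.map fun _ => ‖z - r‖).prod := by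
        rw [Multiset.map_const', Multiset.prod_replicate, ← hsplit.natDegree_eq_card_roots]
    _ ≤ ‖p.eval z‖ := hnorm ▸ Multiset.prod_map_le_prod_map₀ _ _
        (fun _ _ => norm_nonneg _) hmin

theorem tendsto_of_norm_sub_pow_le {ι E : Type*} [SeminormedAddCommGroup E] {l : Filter ι}
    {f : ι → E} {g : ι → ℝ} {z : E} {k : ℕ} (hfg : ∀ i, ‖z - f i‖ ^ k ≤ g i)
    (hg : Tendsto g l (𝓝 0)) : Tendsto f l (𝓝 z) := by
  refine Metric.tendsto_nhds.mpr fun ε hε => ?_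
  filter_upwards [hg.eventually (gt_mem_nhds (pow_pos hε k))] with i hi
  rw [dist_comm, dist_eq_norm]
  exact lt_of_pow_lt_pow_left₀ k hε.le ((hfg i).trans_lt hi)

theorem Matrix.exists_isCompact_forall_mem_of_forall_norm_le {X R m n : Type*}
    [SeminormedAddCommGroup R] [ProperSpace R] (P : X → Matrix m n R)
    (h : ∀ i j, ∃ C, ∀ x, ‖P x i j‖ ≤ C) : ∃ K, IsCompact K ∧ ∀ x, P x ∈ K := by
  choose C hC using h
  exact ⟨Set.univ.pi fun i => Set.univ.pi fun j => Metric.closedBall 0 (C i j),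
    isCompact_univ_pi fun i => isCompact_univ_pi fun j => isCompact_closedBall _ _,
    fun x => Set.mem_univ_pi.mpr fun i => Set.mem_univ_pi.mpr fun j =>
      mem_closedBall_zero_iff.mpr (hC i j x)⟩

section

variable {n : Type*} [Fintype n] [DecidableEq n]

theorem Matrix.exists_det_sub_smul_eq_zero_norm_sub_pow_le [Nonempty n] (A : Matrix n n ℂ)
    (z : ℂ) :
    ∃ μ : ℂ, (A - μ • 1).det = 0 ∧ ‖z - μ‖ ^ Fintype.card n ≤ ‖(A - z • 1).det‖ := by
  have hdeg : A.charpoly.natDegree = Fintype.card n := A.charpoly_natDegree_eq_dim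
  obtain ⟨μ, hμ, hle⟩ := A.charpoly_monic.exists_isRoot_norm_sub_pow_natDegree_le
    (hdeg ▸ Fintype.card_ne_zero) z
  have hdet : ∀ t : ℂ, (A - t • 1).det = (-1) ^ Fintype.card n * A.charpoly.eval t := by
    intro t
    rw [eval_charpoly, ← det_neg, neg_sub, smul_one_eq_diagonal, scalar_apply]
  refine ⟨μ, by rw [hdet, hμ.eq_zero, mul_zero], ?_⟩
  rwa [hdet, norm_mul, norm_pow, norm_neg, norm_one, one_pow, one_mul, ← hdeg]

theorem Matrix.norm_det_mul_norm_le (B : Matrix n n ℂ) (u : EuclideanSpace ℂ n) :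
    ‖B.det‖ * ‖u‖ ≤ ‖toEuclideanCLM (𝕜 := ℂ) B.adjugate‖ * ‖toEuclideanLin B u‖ := by
  have h : toEuclideanCLM (𝕜 := ℂ) B.adjugate (toEuclideanLin B u) = B.det • u := by
    rw [← coe_toEuclideanCLM_eq_toEuclideanLin, ContinuousLinearMap.coe_coe,
      ← mul_apply_eq_comp, ← map_mul, adjugate_mul, map_smul, map_one]
    rfl
  rw [← norm_smul, ← h]
  exact ContinuousLinearMap.le_opNorm _ _

theorem Matrix.exists_ne_zero_toEuclideanLin_eq_smul {A : Matrix n n ℂ} {μ : ℂ}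
    (h : (A - μ • 1).det = 0) : ∃ u : EuclideanSpace ℂ n, u ≠ 0 ∧ toEuclideanLin A u = μ • u := by
  obtain ⟨v, hv, hAv⟩ := exists_mulVec_eq_zero_iff.mpr h
  refine ⟨WithLp.toLp 2 v, by simpa using hv, ?_⟩
  rw [sub_mulVec, smul_mulVec, one_mulVec, sub_eq_zero] at hAv
  ext i
  simp [hAv]

theorem Matrix.continuous_toEuclideanCLM :
    Continuous (toEuclideanCLM (n := n) (𝕜 := ℂ)) :=
  LinearMap.continuous_of_finiteDimensional
    (toEuclideanCLM (n := n) (𝕜 := ℂ)).toAlgEquiv.toLinearMap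

theorem IsCompact.exists_bound_norm_toEuclideanCLM_adjugate {K : Set (Matrix n n ℂ)}
    (hK : IsCompact K) : ∃ C, ∀ B ∈ K, ‖toEuclideanCLM (𝕜 := ℂ) B.adjugate‖ ≤ C :=
  hK.exists_bound_of_continuousOn
    (continuous_toEuclideanCLM.comp continuous_id.matrix_adjugate).continuousOn

theorem IsCompact.exists_eigenvalue_norm_sub_pow_le_mul_residual {K : Set (Matrix n n ℂ)}
    (hK : IsCompact K) (z : ℂ) :
    ∃ C, ∀ A ∈ K, ∀ u : EuclideanSpace ℂ n, u ≠ 0 → ∃ μ : ℂ, (A - μ • 1).det = 0 ∧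
      ‖z - μ‖ ^ Fintype.card n ≤ C * (‖toEuclideanLin A u - z • u‖ / ‖u‖) := by
  have hKz := hK.image (continuous_sub_right (z • 1 : Matrix n n ℂ))
  obtain ⟨C, hC⟩ := hKz.exists_bound_norm_toEuclideanCLM_adjugate
  refine ⟨C, fun A hA u hu => ?_⟩
  have : Nonempty n := not_isEmpty_iff.mp fun _ => hu (Subsingleton.elim _ _)
  obtain ⟨μ, hμ, hle⟩ := A.exists_det_sub_smul_eq_zero_norm_sub_pow_le z
  refine ⟨μ, hμ, hle.trans ?_⟩
  have hsub : toEuclideanLin (A - z • 1) u = toEuclideanLin A u - z • u := by simp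
  rw [mul_div_assoc', le_div_iff₀ (norm_pos_iff.mpr hu), ← hsub]
  exact ((A - z • 1).norm_det_mul_norm_le u).trans
    (mul_le_mul_of_nonneg_right (hC _ ⟨A, hA, rfl⟩) (norm_nonneg _))

end

theorem sigmaInf_iff_limit_of_eigenvalues_general {d N : ℕ}
    (P : EuclideanSpace ℝ (Fin d) → Matrix (Fin N) (Fin N) ℂ)
    (hbdd : ∀ (i j : Fin N) (n : ℕ), ∃ C : ℝ,
      ∀ w, ‖iteratedFDeriv ℝ n (fun w => P w i j) w‖ ≤ C)
    (lam : ℂ) :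
    lam ∈ SigmaInf P ↔
      ∃ (w : ℕ → EuclideanSpace ℝ (Fin d)) (mu : ℕ → ℂ),
        Tendsto (fun j => ‖w j‖) atTop atTop ∧
        (∀ j, (P (w j) - mu j • (1 : Matrix (Fin N) (Fin N) ℂ)).det = 0) ∧
        Tendsto mu atTop (nhds lam) := by
  constructor
  · rintro ⟨w, u, hu, hw, hres⟩
    obtain ⟨K, hK, hPK⟩ := exists_isCompact_forall_mem_of_forall_norm_le P fun i j => by
      simpa only [norm_iteratedFDeriv_zero] using hbdd i j 0
    obtain ⟨C, hC⟩ := hK.exists_eigenvalue_norm_sub_pow_le_mul_residual lam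
    choose mu hmu hle using fun j => hC _ (hPK (w j)) (u j) (hu j)
    exact ⟨w, mu, hw, hmu, tendsto_of_norm_sub_pow_le hle (by simpa using hres.const_mul C)⟩
  · rintro ⟨w, mu, hw, hdet, hmu⟩
    choose u hu hPu using fun j => exists_ne_zero_toEuclideanLin_eq_smul (hdet j)
    refine ⟨w, u, hu, hw, ?_⟩
    simpa [hPu, ← sub_smul, norm_smul, hu] using (hmu.sub_const lam).norm

/-- **Proposition 2.4.** If `P ∈ C_b^∞(ℝ^d, Mat_N(ℂ))` (smooth with all derivatives bounded),
then `λ ∈ Σ_∞(P)` if and only if `λ` is a limit of eigenvalues of `P` at infinity. -/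
theorem sigmaInf_iff_limit_of_eigenvalues {d N : ℕ}
    (P : EuclideanSpace ℝ (Fin d) → Matrix (Fin N) (Fin N) ℂ)
    (hsmooth : ∀ i j, ContDiff ℝ (⊤ : ℕ∞) fun w => P w i j)
    (hbdd : ∀ (i j : Fin N) (n : ℕ), ∃ C : ℝ,
      ∀ w, ‖iteratedFDeriv ℝ n (fun w => P w i j) w‖ ≤ C)
    (lam : ℂ) :
    lam ∈ SigmaInf P ↔
      ∃ (w : ℕ → EuclideanSpace ℝ (Fin d)) (mu : ℕ → ℂ),
        Tendsto (fun j => ‖w j‖) atTop atTop ∧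
        (∀ j, (P (w j) - mu j • (1 : Matrix (Fin N) (Fin N) ℂ)).det = 0) ∧
        Tendsto mu atTop (nhds lam) :=
  sigmaInf_iff_limit_of_eigenvalues_general P hbdd lam
end

section
/- Let Q be an N×N complex matrix such that Im(zQ) ≥ 0 for some nonzero z ∈ ℂ. Then Ker Q = Ker Q* = Ker(Re Q) ∩ Ker(Im Q), and Ran Q = Ran(Re Q) + Ran(Im Q) = (Ker Q)^⊥, the orthogonal complement of Ker Q in ℂ^N. -/
/-!
If `B = Im (zQ) ≥ 0` and `Qx = 0`, then `x* B x = 0`, hence `Bx = 0`, which forces `Q* x = 0`.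
The hypothesis is invariant under `(Q, z) ↦ (Q*, -z̄)`, because `Im (-(zQ)*) = Im (zQ)`, so also
`Ker Q* ⊆ Ker Q`. As `Q = Re Q + i Im Q` and `Q* = Re Q - i Im Q`, the common kernel of `Q` and
`Q*` is `Ker (Re Q) ∩ Ker (Im Q)`. The range statements are the orthogonal complements of the
kernel statements, via `Ran A = (Ker A*)ᗮ` and the hermiticity of `Re Q` and `Im Q`.
-/

open ComplexOrder Matrix

/-- The symmetric (real) part `Re A = (A + A*)/2` of a matrix. -/
noncomputable def matRe {N : ℕ} (A : Matrix (Fin N) (Fin N) ℂ) : Matrix (Fin N) (Fin N) ℂ :=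
  (2 : ℂ)⁻¹ • (A + Aᴴ)

/-- The antisymmetric (imaginary) part `Im A = (A − A*)/(2i)` of a matrix. -/
noncomputable def matIm {N : ℕ} (A : Matrix (Fin N) (Fin N) ℂ) : Matrix (Fin N) (Fin N) ℂ :=
  (2 * Complex.I)⁻¹ • (A - Aᴴ)

theorem Submodule.orthogonal_inf {𝕜 E : Type*} [RCLike 𝕜] [NormedAddCommGroup E]
    [InnerProductSpace 𝕜 E] [FiniteDimensional 𝕜 E] (U V : Submodule 𝕜 E) :
    (U ⊓ V)ᗮ = Uᗮ ⊔ Vᗮ := by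
  conv_lhs => rw [← U.orthogonal_orthogonal, ← V.orthogonal_orthogonal]
  rw [Submodule.inf_orthogonal, Submodule.orthogonal_orthogonal]

namespace Matrix

section toEuclideanLin

variable {𝕜 m n : Type*} [RCLike 𝕜] [Fintype n] [DecidableEq n]

theorem mem_ker_toEuclideanLin {A : Matrix m n 𝕜} {x : EuclideanSpace 𝕜 n} :
    x ∈ LinearMap.ker (toEuclideanLin A) ↔ A *ᵥ x.ofLp = 0 := by
  rw [LinearMap.mem_ker, ← WithLp.ofLp_eq_zero]
  rfl

theorem ker_toEuclideanLin_smul (A : Matrix m n 𝕜) {c : 𝕜} (hc : c ≠ 0) :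
    LinearMap.ker (toEuclideanLin (c • A)) = LinearMap.ker (toEuclideanLin A) := by
  rw [map_smul, LinearMap.ker_smul _ _ hc]

theorem range_toEuclideanLin_eq_orthogonal_ker_conjTranspose [Fintype m] [DecidableEq m]
    (A : Matrix m n 𝕜) :
    LinearMap.range (toEuclideanLin A) = (LinearMap.ker (toEuclideanLin Aᴴ))ᗮ := by
  rw [LinearMap.orthogonal_ker, ← toEuclideanLin_conjTranspose_eq_adjoint,
    conjTranspose_conjTranspose]

theorem IsHermitian.range_toEuclideanLin {A : Matrix n n 𝕜} (hA : A.IsHermitian) :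
    LinearMap.range (toEuclideanLin A) = (LinearMap.ker (toEuclideanLin A))ᗮ := by
  rw [range_toEuclideanLin_eq_orthogonal_ker_conjTranspose, hA.eq]

end toEuclideanLin

end Matrix

section matReIm

variable {N : ℕ}

theorem matRe_isHermitian (A : Matrix (Fin N) (Fin N) ℂ) : (matRe A).IsHermitian := by
  simp [matRe, IsHermitian, conjTranspose_smul, add_comm]

theorem matIm_isHermitian (A : Matrix (Fin N) (Fin N) ℂ) : (matIm A).IsHermitian := by
  have : star (2 * Complex.I)⁻¹ = -(2 * Complex.I)⁻¹ := by simp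
  rw [matIm, IsHermitian, conjTranspose_smul, conjTranspose_sub, conjTranspose_conjTranspose,
    this, neg_smul, ← smul_neg, neg_sub]

theorem matIm_neg_conjTranspose (A : Matrix (Fin N) (Fin N) ℂ) : matIm (-Aᴴ) = matIm A := by
  rw [matIm, conjTranspose_neg, conjTranspose_conjTranspose, matIm, neg_sub_neg]

private theorem I_mul_inv_two_mul_I : Complex.I * (2 * Complex.I)⁻¹ = 2⁻¹ := by
  field_simp

theorem matRe_add_I_smul_matIm (A : Matrix (Fin N) (Fin N) ℂ) :
    matRe A + Complex.I • matIm A = A := by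
  rw [matRe, matIm, smul_smul, I_mul_inv_two_mul_I]
  module

theorem matRe_sub_I_smul_matIm (A : Matrix (Fin N) (Fin N) ℂ) :
    matRe A - Complex.I • matIm A = Aᴴ := by
  rw [matRe, matIm, smul_smul, I_mul_inv_two_mul_I]
  module

theorem conjTranspose_mulVec_eq_zero_of_posSemidef_matIm {A : Matrix (Fin N) (Fin N) ℂ}
    (hA : (matIm A).PosSemidef) {x : Fin N → ℂ} (hx : A *ᵥ x = 0) : Aᴴ *ᵥ x = 0 := by
  have hImx : matIm A *ᵥ x = -(2 * Complex.I)⁻¹ • (Aᴴ *ᵥ x) := by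
    rw [matIm, smul_mulVec, sub_mulVec, hx, zero_sub, smul_neg, neg_smul]
  have hquad : star x ⬝ᵥ matIm A *ᵥ x = 0 := by
    rw [hImx, dotProduct_smul, dotProduct_mulVec, ← star_mulVec, hx, star_zero, zero_dotProduct,
      smul_zero]
  rw [hA.dotProduct_mulVec_zero_iff, hImx] at hquad
  simpa using hquad

theorem ker_toEuclideanLin_le_ker_conjTranspose_of_posSemidef_matIm
    {A : Matrix (Fin N) (Fin N) ℂ} (hA : (matIm A).PosSemidef) :
    LinearMap.ker (toEuclideanLin A) ≤ LinearMap.ker (toEuclideanLin Aᴴ) := fun _ hx =>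
  mem_ker_toEuclideanLin.2 <|
    conjTranspose_mulVec_eq_zero_of_posSemidef_matIm hA (mem_ker_toEuclideanLin.1 hx)

theorem ker_toEuclideanLin_conjTranspose_eq_of_posSemidef_matIm_smul
    {Q : Matrix (Fin N) (Fin N) ℂ} {z : ℂ} (hz : z ≠ 0) (hQ : (matIm (z • Q)).PosSemidef) :
    LinearMap.ker (toEuclideanLin Qᴴ) = LinearMap.ker (toEuclideanLin Q) := by
  apply le_antisymm
  · have := ker_toEuclideanLin_le_ker_conjTranspose_of_posSemidef_matIm
      (A := -(z • Q)ᴴ) (by rwa [matIm_neg_conjTranspose])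
    rwa [conjTranspose_neg, conjTranspose_conjTranspose, conjTranspose_smul, ← neg_smul,
      ← neg_smul, ker_toEuclideanLin_smul _ (neg_ne_zero.2 (star_ne_zero.2 hz)),
      ker_toEuclideanLin_smul _ (neg_ne_zero.2 hz)] at this
  · have := ker_toEuclideanLin_le_ker_conjTranspose_of_posSemidef_matIm hQ
    rwa [conjTranspose_smul, ker_toEuclideanLin_smul _ hz,
      ker_toEuclideanLin_smul _ (star_ne_zero.2 hz)] at this

theorem ker_matRe_inf_ker_matIm (A : Matrix (Fin N) (Fin N) ℂ) :
    LinearMap.ker (toEuclideanLin (matRe A)) ⊓ LinearMap.ker (toEuclideanLin (matIm A)) =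
      LinearMap.ker (toEuclideanLin A) ⊓ LinearMap.ker (toEuclideanLin Aᴴ) := by
  ext x
  simp only [Submodule.mem_inf, mem_ker_toEuclideanLin]
  constructor
  · rintro ⟨hRe, hIm⟩
    constructor
    · rw [← matRe_add_I_smul_matIm A, add_mulVec, smul_mulVec, hRe, hIm, smul_zero, add_zero]
    · rw [← matRe_sub_I_smul_matIm A, sub_mulVec, smul_mulVec, hRe, hIm, smul_zero, sub_zero]
  · rintro ⟨hA, hAH⟩
    rw [matRe, matIm, smul_mulVec, smul_mulVec, add_mulVec, sub_mulVec, hA, hAH, add_zero,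
      sub_zero]
    exact ⟨smul_zero _, smul_zero _⟩

end matReIm

/-- **Lemma 4.6.** If `Q` is an `N × N` complex matrix such that `Im (zQ) ≥ 0` for some
`z ≠ 0`, then `Ker Q = Ker Q* = Ker (Re Q) ∩ Ker (Im Q)`, and
`Ran Q = Ran (Re Q) + Ran (Im Q)` is the orthogonal complement of `Ker Q`. -/
theorem ker_range_of_semibounded {N : ℕ} (Q : Matrix (Fin N) (Fin N) ℂ)
    (h : ∃ z : ℂ, z ≠ 0 ∧ (matIm (z • Q)).PosSemidef) :
    LinearMap.ker (Matrix.toEuclideanLin Q) = LinearMap.ker (Matrix.toEuclideanLin Qᴴ) ∧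
    LinearMap.ker (Matrix.toEuclideanLin Q) =
      LinearMap.ker (Matrix.toEuclideanLin (matRe Q)) ⊓
        LinearMap.ker (Matrix.toEuclideanLin (matIm Q)) ∧
    LinearMap.range (Matrix.toEuclideanLin Q) =
      LinearMap.range (Matrix.toEuclideanLin (matRe Q)) ⊔
        LinearMap.range (Matrix.toEuclideanLin (matIm Q)) ∧
    LinearMap.range (Matrix.toEuclideanLin Q) =
      (LinearMap.ker (Matrix.toEuclideanLin Q))ᗮ := by
  obtain ⟨z, hz, hQ⟩ := h
  have hker := ker_toEuclideanLin_conjTranspose_eq_of_posSemidef_matIm_smul hz hQ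
  have hkerReIm : LinearMap.ker (toEuclideanLin Q) =
      LinearMap.ker (toEuclideanLin (matRe Q)) ⊓ LinearMap.ker (toEuclideanLin (matIm Q)) := by
    rw [ker_matRe_inf_ker_matIm, hker, inf_idem]
  have hrange : LinearMap.range (toEuclideanLin Q) = (LinearMap.ker (toEuclideanLin Q))ᗮ := by
    rw [range_toEuclideanLin_eq_orthogonal_ker_conjTranspose, hker]
  refine ⟨hker.symm, hkerReIm, ?_, hrange⟩
  rw [hrange, hkerReIm, Submodule.orthogonal_inf, (matRe_isHermitian Q).range_toEuclideanLin,
    (matIm_isHermitian Q).range_toEuclideanLin]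
end

section
/- Let P₀, P₁, M be N×N complex matrices and let c, c′ > 0 and C ≥ 0 be constants such that for all u ∈ ℂ^N: Re⟨M P₁ u, u⟩ ≥ c‖u‖² − C‖P₀ u‖² and Im⟨M P₀ u, u⟩ ≥ c′‖P₀ u‖². Then M is invertible. -/
open Matrix

/-!
If `Mᴴ u = 0`, then `⟨M A u, u⟩ = ⟨A u, Mᴴ u⟩ = 0` for every matrix `A`. The second inequality
then forces `P₀ u = 0`, after which the first one reads `c ‖u‖² ≤ 0`, so `u = 0`. Hence `Mᴴ`,
and with it `M`, is injective, i.e. invertible.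
-/

theorem Matrix.isUnit_iff_ker_toEuclideanLin_eq_bot {𝕜 n : Type*} [RCLike 𝕜] [Fintype n]
    [DecidableEq n] (M : Matrix n n 𝕜) : IsUnit M ↔ LinearMap.ker (toEuclideanLin M) = ⊥ :=
  (MulEquiv.isUnit_map (toLpLinAlgEquiv 2)).symm.trans (LinearMap.isUnit_iff_ker_eq_bot _)

theorem Matrix.inner_toEuclideanLin_conjTranspose {𝕜 m n : Type*} [RCLike 𝕜] [Fintype m]
    [DecidableEq m] [Fintype n] [DecidableEq n] (M : Matrix m n 𝕜) (u : EuclideanSpace 𝕜 m)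
    (v : EuclideanSpace 𝕜 n) :
    inner 𝕜 (toEuclideanLin Mᴴ u) v = inner 𝕜 u (toEuclideanLin M v) := by
  rw [toEuclideanLin_conjTranspose_eq_adjoint, LinearMap.adjoint_inner_left]

theorem Matrix.inner_toEuclideanLin_mul_self_eq_zero {𝕜 n : Type*} [RCLike 𝕜] [Fintype n]
    [DecidableEq n] {M : Matrix n n 𝕜} {u : EuclideanSpace 𝕜 n} (hu : toEuclideanLin Mᴴ u = 0)
    (A : Matrix n n 𝕜) : inner 𝕜 u (toEuclideanLin (M * A) u) = 0 := by
  rw [toLpLin_mul_same, LinearMap.comp_apply, ← inner_toEuclideanLin_conjTranspose, hu,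
    inner_zero_left]

theorem symmetrizer_invertible_general {N : ℕ}
    (P₀ P₁ M : Matrix (Fin N) (Fin N) ℂ)
    (c c' C : ℝ) (hc : 0 < c) (hc' : 0 < c')
    (h1 : ∀ u : EuclideanSpace ℂ (Fin N),
      c * ‖u‖ ^ 2 - C * ‖Matrix.toEuclideanLin P₀ u‖ ^ 2 ≤
        (inner ℂ u (Matrix.toEuclideanLin (M * P₁) u) : ℂ).re)
    (h2 : ∀ u : EuclideanSpace ℂ (Fin N),
      c' * ‖Matrix.toEuclideanLin P₀ u‖ ^ 2 ≤
        (inner ℂ u (Matrix.toEuclideanLin (M * P₀) u) : ℂ).im) :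
    IsUnit M := by
  rw [← isUnit_conjTranspose, isUnit_iff_ker_toEuclideanLin_eq_bot, LinearMap.ker_eq_bot']
  intro u hu
  have hP₀u : ‖toEuclideanLin P₀ u‖ ^ 2 = 0 := by
    have := h2 u
    rw [inner_toEuclideanLin_mul_self_eq_zero hu, Complex.zero_im] at this
    nlinarith [sq_nonneg ‖toEuclideanLin P₀ u‖]
  have hu' : ‖u‖ ^ 2 = 0 := by
    have := h1 u
    rw [inner_toEuclideanLin_mul_self_eq_zero hu, Complex.zero_re, hP₀u] at this
    nlinarith [sq_nonneg ‖u‖]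
  simpa using hu'

/-- **(Part of Proposition 4.7.)** If `P₀`, `P₁`, `M` are `N × N` complex matrices and there
are constants `c, c′ > 0` and `C ≥ 0` with `Re⟨M P₁ u, u⟩ ≥ c‖u‖² − C‖P₀ u‖²` and
`Im⟨M P₀ u, u⟩ ≥ c′‖P₀ u‖²` for all `u ∈ ℂ^N`, then `M` is invertible.
Here `⟨a, b⟩ = ⟪b, a⟫_ℂ` is linear in the first argument. -/
theorem symmetrizer_invertible {N : ℕ}
    (P₀ P₁ M : Matrix (Fin N) (Fin N) ℂ)
    (c c' C : ℝ) (hc : 0 < c) (hc' : 0 < c') (hC : 0 ≤ C)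
    (h1 : ∀ u : EuclideanSpace ℂ (Fin N),
      c * ‖u‖ ^ 2 - C * ‖Matrix.toEuclideanLin P₀ u‖ ^ 2 ≤
        (inner ℂ u (Matrix.toEuclideanLin (M * P₁) u) : ℂ).re)
    (h2 : ∀ u : EuclideanSpace ℂ (Fin N),
      c' * ‖Matrix.toEuclideanLin P₀ u‖ ^ 2 ≤
        (inner ℂ u (Matrix.toEuclideanLin (M * P₀) u) : ℂ).im) :
    IsUnit M :=
  symmetrizer_invertible_general P₀ P₁ M c c' C hc hc' h1 h2
end

section
/- Let f : ℝ → ℝ be smooth with f ≥ 0, and assume there are c, R > 0 with f(t) ≥ c for all |t| ≥ R. Let μ > 0. Then the following are equivalent: (i) there exist C > 0 and δ₀ > 0 such that the Lebesgue measure of {t ∈ ℝ : f(t) ≤ δ} is at most Cδ^μ for all 0 < δ ≤ δ₀; (ii) there exists an even integer k ≥ 0 with kμ ≤ 1 such that Σ_{j=0}^{k} |f^{(j)}(t)| > 0 for every t ∈ ℝ. -/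
/-!
By Taylor's theorem, if the derivatives of `f` of order `< m` vanish at `t₀`, then
`f x = f⁽ᵐ⁾(t₀) / m! * (x - t₀)^m + o((x - t₀)^m)`; for `f ≥ 0` this forces the first
non-vanishing derivative to have even order.

Let `k` be the largest even integer with `kμ ≤ 1`. If all derivatives of order `≤ k` vanished at
`t₀`, then so would the one of order `k + 1`, hence `f = O(|x - t₀|^(k+2))` and `{f ≤ δ}` would
contain an interval of length `≍ δ^(1/(k+2))`, which is not `O(δ^μ)` since `(k + 2)μ > 1`.

Conversely, if at each point some derivative of order `≤ k ≤ 1/μ` is nonzero, then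
`|x - t|^(1/μ) = O(f)` near every `t`. Finitely many such neighbourhoods cover `[-R, R]`, outside
of which `f ≥ c`, and inside each of them `{f ≤ δ}` lies in an interval of length `≍ δ^μ`.
-/

open Asymptotics Filter MeasureTheory Set Topology
open scoped Nat

theorem sum_range_abs_pos_iff {a : ℕ → ℝ} {k : ℕ} :
    0 < ∑ j ∈ Finset.range (k + 1), |a j| ↔ ∃ j ≤ k, a j ≠ 0 := by
  simp [Finset.sum_pos_iff_of_nonneg fun j _ ↦ abs_nonneg (a j)]

theorem exists_even_mul_le_one_lt_add_two_mul {μ : ℝ} (hμ : 0 < μ) :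
    ∃ k : ℕ, Even k ∧ (k : ℝ) * μ ≤ 1 ∧ 1 < ((k : ℝ) + 2) * μ := by
  set n := ⌊1 / (2 * μ)⌋₊
  have hle := (le_div_iff₀ (by positivity)).mp (Nat.floor_le (by positivity : 0 ≤ 1 / (2 * μ)))
  have hlt := (div_lt_iff₀ (by positivity)).mp (Nat.lt_floor_add_one (1 / (2 * μ)))
  exact ⟨2 * n, even_two_mul n, by push_cast; linarith, by push_cast; linarith⟩

theorem tendsto_rpow_nhdsGT_zero {e : ℝ} (he : 0 < e) :
    Tendsto (fun δ : ℝ ↦ δ ^ e) (𝓝[>] 0) (𝓝 0) := by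
  simpa [Real.zero_rpow he.ne'] using
    (Real.continuousAt_rpow_const 0 e (Or.inr he.le)).tendsto.mono_left nhdsWithin_le_nhds

theorem eventually_mul_rpow_lt_mul_rpow {A s μ : ℝ} (C : ℝ) (hA : 0 < A) (hsμ : s < μ) :
    ∀ᶠ δ in 𝓝[>] 0, C * δ ^ μ < A * δ ^ s := by
  have hlim : Tendsto (fun δ : ℝ ↦ C * δ ^ (μ - s)) (𝓝[>] 0) (𝓝 0) := by
    simpa using (tendsto_rpow_nhdsGT_zero (sub_pos.2 hsμ)).const_mul C
  filter_upwards [hlim.eventually_lt_const hA, self_mem_nhdsWithin] with δ hδA hδ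
  rw [show μ = μ - s + s by ring, Real.rpow_add hδ, ← mul_assoc]
  exact mul_lt_mul_of_pos_right hδA (Real.rpow_pos_of_pos hδ s)

section VanishingOrder

variable {f : ℝ → ℝ} {t₀ : ℝ} {m : ℕ}

theorem isLittleO_sub_iteratedDeriv_mul_pow (hf : ContDiff ℝ m f)
    (hz : ∀ j < m, iteratedDeriv j f t₀ = 0) :
    (fun x ↦ f x - iteratedDeriv m f t₀ / m ! * (x - t₀) ^ m) =o[𝓝 t₀]
      fun x ↦ (x - t₀) ^ m := by
  have htaylor : ∀ x, taylorWithinEval f m univ t₀ x =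
      iteratedDeriv m f t₀ / m ! * (x - t₀) ^ m := by
    intro x
    rw [taylor_within_apply, Finset.sum_range_succ, Finset.sum_eq_zero fun j hj ↦ ?_]
    · simp only [iteratedDerivWithin_univ, smul_eq_mul, zero_add]
      ring
    · rw [iteratedDerivWithin_univ, hz j (Finset.mem_range.mp hj), smul_zero]
  simpa only [htaylor] using taylor_isLittleO_univ (x₀ := t₀) hf

theorem isBigO_pow_sub_of_forall_iteratedDeriv_eq_zero (hf : ContDiff ℝ m f)
    (hz : ∀ j < m, iteratedDeriv j f t₀ = 0) :
    f =O[𝓝 t₀] fun x ↦ (x - t₀) ^ m := by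
  simpa using (isLittleO_sub_iteratedDeriv_mul_pow hf hz).isBigO.add
    ((isBigO_refl (fun x ↦ (x - t₀) ^ m) _).const_mul_left (iteratedDeriv m f t₀ / m !))

theorem pow_sub_isBigO_of_iteratedDeriv_ne_zero (hf : ContDiff ℝ m f)
    (hz : ∀ j < m, iteratedDeriv j f t₀ = 0) (hd : iteratedDeriv m f t₀ ≠ 0) :
    (fun x ↦ (x - t₀) ^ m) =O[𝓝 t₀] f := by
  have hc : iteratedDeriv m f t₀ / m ! ≠ 0 := div_ne_zero hd (by positivity)
  have hequiv : f ~[𝓝 t₀] fun x ↦ iteratedDeriv m f t₀ / m ! * (x - t₀) ^ m :=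
    (isLittleO_sub_iteratedDeriv_mul_pow hf hz).trans_isBigO (isBigO_self_const_mul hc _ _)
  exact (isBigO_self_const_mul hc _ _).trans hequiv.isBigO_symm

theorem tendsto_div_pow_sub_of_forall_iteratedDeriv_eq_zero (hf : ContDiff ℝ m f)
    (hz : ∀ j < m, iteratedDeriv j f t₀ = 0) :
    Tendsto (fun x ↦ f x / (x - t₀) ^ m) (𝓝[≠] t₀) (𝓝 (iteratedDeriv m f t₀ / m !)) := by
  have h := ((isLittleO_sub_iteratedDeriv_mul_pow hf hz).tendsto_div_nhds_zero.mono_left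
    (nhdsWithin_le_nhds (s := {t₀}ᶜ))).add_const (iteratedDeriv m f t₀ / m !)
  rw [zero_add] at h
  refine h.congr' (eventually_nhdsWithin_of_forall fun x hx ↦ ?_)
  have hx : (x - t₀) ^ m ≠ 0 := pow_ne_zero _ (sub_ne_zero.mpr hx)
  rw [sub_div, mul_div_cancel_right₀ _ hx, sub_add_cancel]

theorem iteratedDeriv_eq_zero_of_nonneg_of_odd (hf : ContDiff ℝ m f) (hf0 : ∀ x, 0 ≤ f x)
    (hm : Odd m) (hz : ∀ j < m, iteratedDeriv j f t₀ = 0) : iteratedDeriv m f t₀ = 0 := by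
  have hlim := tendsto_div_pow_sub_of_forall_iteratedDeriv_eq_zero hf hz
  have hright : 0 ≤ iteratedDeriv m f t₀ / m ! :=
    ge_of_tendsto (hlim.mono_left (nhdsGT_le_nhdsNE t₀)) <| eventually_nhdsWithin_of_forall
      fun x hx ↦ div_nonneg (hf0 x) (pow_nonneg (sub_nonneg.2 (le_of_lt hx)) m)
  have hleft : iteratedDeriv m f t₀ / m ! ≤ 0 :=
    le_of_tendsto (hlim.mono_left (nhdsLT_le_nhdsNE t₀)) <| eventually_nhdsWithin_of_forall
      fun x hx ↦ div_nonpos_of_nonneg_of_nonpos (hf0 x) (hm.pow_neg (sub_neg.2 hx)).le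
  simpa [Nat.factorial_ne_zero] using le_antisymm hleft hright

end VanishingOrder

theorem abs_sub_rpow_isBigO_pow_sub {t₀ p : ℝ} {m : ℕ} (hmp : (m : ℝ) ≤ p) :
    (fun x ↦ |x - t₀| ^ p) =O[𝓝 t₀] fun x ↦ (x - t₀) ^ m := by
  refine IsBigO.of_bound 1 ?_
  filter_upwards [Metric.closedBall_mem_nhds t₀ one_pos] with x hx
  rw [Real.norm_of_nonneg (by positivity), norm_pow, Real.norm_eq_abs, one_mul,
    ← Real.rpow_natCast]
  exact Real.rpow_le_rpow_of_exponent_ge' (abs_nonneg _) hx (Nat.cast_nonneg m) hmp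

theorem abs_sub_rpow_isBigO_of_exists_iteratedDeriv_ne_zero {f : ℝ → ℝ} {t₀ p : ℝ} {k : ℕ}
    (hf : ContDiff ℝ k f) (h : ∃ j ≤ k, iteratedDeriv j f t₀ ≠ 0) (hkp : (k : ℝ) ≤ p) :
    (fun x ↦ |x - t₀| ^ p) =O[𝓝 t₀] f := by
  classical
  let m := Nat.find h
  have hmk : m ≤ k := (Nat.find_spec h).1
  have hz : ∀ j < m, iteratedDeriv j f t₀ = 0 := fun j hj ↦
    not_not.mp fun hne ↦ Nat.find_min h hj ⟨hj.le.trans hmk, hne⟩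
  exact (abs_sub_rpow_isBigO_pow_sub ((Nat.cast_le.mpr hmk).trans hkp)).trans
    (pow_sub_isBigO_of_iteratedDeriv_ne_zero (hf.of_le (by exact_mod_cast hmk)) hz
      (Nat.find_spec h).2)

theorem exists_volume_inter_abs_le_le_mul_rpow {f : ℝ → ℝ} {S : Set ℝ} (hS : IsCompact S)
    {p : ℝ} (hp : 0 < p) (hO : ∀ t ∈ S, (fun x ↦ |x - t| ^ p) =O[𝓝 t] f) :
    ∃ C > 0, ∀ δ, 0 ≤ δ →
      volume (S ∩ {x | |f x| ≤ δ}) ≤ ENNReal.ofReal (C * δ ^ p⁻¹) := by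
  choose! K hK hOK using fun t ht ↦ (hO t ht).exists_pos
  obtain ⟨s, hsS, hcover⟩ := hS.elim_nhds_subcover
    (fun t ↦ {x | |x - t| ^ p ≤ K t * |f x|}) fun t ht ↦ by
      filter_upwards [(hOK t ht).bound] with x hx
      rwa [Real.norm_of_nonneg (by positivity), Real.norm_eq_abs] at hx
  have hKs : ∀ t ∈ s, 0 ≤ 2 * K t ^ p⁻¹ := fun t ht ↦
    mul_nonneg zero_le_two (Real.rpow_nonneg (hK t (hsS t ht)).le _)
  refine ⟨1 + ∑ t ∈ s, 2 * K t ^ p⁻¹, by linarith [Finset.sum_nonneg hKs], fun δ hδ ↦ ?_⟩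
  have hsub : S ∩ {x | |f x| ≤ δ} ⊆ ⋃ t ∈ s, Metric.closedBall t ((K t * δ) ^ p⁻¹) := by
    rintro x ⟨hxS, hxδ⟩
    obtain ⟨t, hts, hxt⟩ := mem_iUnion₂.mp (hcover hxS)
    have hKt := (hK t (hsS t hts)).le
    refine mem_iUnion₂.mpr ⟨t, hts, ?_⟩
    rw [Metric.mem_closedBall, Real.dist_eq,
      Real.le_rpow_inv_iff_of_pos (abs_nonneg _) (mul_nonneg hKt hδ) hp]
    exact hxt.trans (mul_le_mul_of_nonneg_left hxδ hKt)
  calc volume (S ∩ {x | |f x| ≤ δ})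
      ≤ ∑ t ∈ s, volume (Metric.closedBall t ((K t * δ) ^ p⁻¹)) :=
        (measure_mono hsub).trans (measure_biUnion_finset_le s _)
    _ = ENNReal.ofReal (∑ t ∈ s, 2 * K t ^ p⁻¹ * δ ^ p⁻¹) := by
        rw [ENNReal.ofReal_sum_of_nonneg fun t ht ↦
          mul_nonneg (hKs t ht) (Real.rpow_nonneg hδ _)]
        refine Finset.sum_congr rfl fun t ht ↦ ?_
        rw [Real.volume_closedBall, Real.mul_rpow (hK t (hsS t ht)).le hδ, mul_assoc]
    _ ≤ ENNReal.ofReal ((1 + ∑ t ∈ s, 2 * K t ^ p⁻¹) * δ ^ p⁻¹) := by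
        rw [← Finset.sum_mul]
        gcongr
        linarith

theorem exists_eventually_ofReal_mul_rpow_le_volume_sublevel {f : ℝ → ℝ} {t₀ : ℝ} {q : ℕ}
    (hq : q ≠ 0) (hO : f =O[𝓝 t₀] fun x ↦ (x - t₀) ^ q) :
    ∃ A > 0, ∀ᶠ δ in 𝓝[>] 0, ENNReal.ofReal (A * δ ^ (q⁻¹ : ℝ)) ≤ volume {x | f x ≤ δ} := by
  obtain ⟨K, hK, hOK⟩ := hO.exists_pos
  obtain ⟨ε, hε, hball⟩ := Metric.eventually_nhds_iff.mp hOK.bound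
  have hq' : (0 : ℝ) < (q : ℝ)⁻¹ := by positivity
  have hradius : Tendsto (fun δ : ℝ ↦ δ ^ (q⁻¹ : ℝ) / K ^ (q⁻¹ : ℝ)) (𝓝[>] 0) (𝓝 0) := by
    simpa using (tendsto_rpow_nhdsGT_zero hq').div_const (K ^ (q⁻¹ : ℝ))
  refine ⟨2 / K ^ (q⁻¹ : ℝ), by positivity, ?_⟩
  filter_upwards [hradius.eventually_lt_const hε, self_mem_nhdsWithin] with δ hδε hδ
  set r := δ ^ (q⁻¹ : ℝ) / K ^ (q⁻¹ : ℝ) with hr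
  have hsub : Metric.closedBall t₀ r ⊆ {x | f x ≤ δ} := by
    intro x hx
    have hfx := hball (hx.trans_lt hδε)
    rw [norm_pow, Real.norm_eq_abs, Real.norm_eq_abs, ← Real.dist_eq] at hfx
    calc f x ≤ |f x| := le_abs_self _
      _ ≤ K * dist x t₀ ^ q := hfx
      _ ≤ K * r ^ q := by gcongr; exact hx
      _ = δ := by
        rw [div_pow, Real.rpow_inv_natCast_pow hδ.le hq, Real.rpow_inv_natCast_pow hK.le hq]
        field_simp
  calc ENNReal.ofReal (2 / K ^ (q⁻¹ : ℝ) * δ ^ (q⁻¹ : ℝ))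
      = volume (Metric.closedBall t₀ r) := by rw [Real.volume_closedBall, hr]; ring_nf
    _ ≤ volume {x | f x ≤ δ} := measure_mono hsub

theorem natCast_mul_le_one_of_eventually_volume_sublevel_le {f : ℝ → ℝ} {t₀ C μ : ℝ} {q : ℕ}
    (hf : ContDiff ℝ q f) (hz : ∀ j < q, iteratedDeriv j f t₀ = 0)
    (hvol : ∀ᶠ δ in 𝓝[>] 0, volume {x | f x ≤ δ} ≤ ENNReal.ofReal (C * δ ^ μ)) :
    (q : ℝ) * μ ≤ 1 := by
  by_contra! hqμ
  have hq : q ≠ 0 := by rintro rfl; norm_num at hqμ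
  have hqμ' : (q⁻¹ : ℝ) < μ := by
    rwa [inv_lt_iff_one_lt_mul₀' (by positivity)]
  obtain ⟨A, hA, hlower⟩ := exists_eventually_ofReal_mul_rpow_le_volume_sublevel hq
    (isBigO_pow_sub_of_forall_iteratedDeriv_eq_zero hf hz)
  obtain ⟨δ, hδlower, hδvol, hδlt, hδ⟩ :=
    (hlower.and (hvol.and ((eventually_mul_rpow_lt_mul_rpow C hA hqμ').and
      self_mem_nhdsWithin))).exists
  have hApos : 0 < A * δ ^ (q⁻¹ : ℝ) := mul_pos hA (Real.rpow_pos_of_pos hδ _)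
  rcases ENNReal.ofReal_le_ofReal_iff'.mp (hδlower.trans hδvol) with h | h <;> linarith

theorem add_two_mul_le_one_of_eventually_volume_sublevel_le {f : ℝ → ℝ} {t₀ C μ : ℝ} {k : ℕ}
    (hf : ContDiff ℝ (k + 2 : ℕ) f) (hf0 : ∀ x, 0 ≤ f x) (hk : Even k)
    (hz : ∀ j ≤ k, iteratedDeriv j f t₀ = 0)
    (hvol : ∀ᶠ δ in 𝓝[>] 0, volume {x | f x ≤ δ} ≤ ENNReal.ofReal (C * δ ^ μ)) :
    ((k : ℝ) + 2) * μ ≤ 1 := by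
  have hodd : iteratedDeriv (k + 1) f t₀ = 0 :=
    iteratedDeriv_eq_zero_of_nonneg_of_odd (hf.of_le (by norm_cast; omega)) hf0 hk.add_one
      fun j hj ↦ hz j (Nat.lt_succ_iff.mp hj)
  have hz' : ∀ j < k + 2, iteratedDeriv j f t₀ = 0 := fun j hj ↦
    (Nat.lt_succ_iff_lt_or_eq.mp hj).elim (fun hj ↦ hz j (Nat.lt_succ_iff.mp hj)) (· ▸ hodd)
  exact_mod_cast natCast_mul_le_one_of_eventually_volume_sublevel_le hf hz' hvol

theorem sublevel_measure_iff_finite_order_general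
    (f : ℝ → ℝ) (hf : ContDiff ℝ (⊤ : ℕ∞) f) (hf0 : ∀ t, 0 ≤ f t)
    (c R : ℝ) (hc : 0 < c) (hinf : ∀ t : ℝ, R ≤ |t| → c ≤ f t)
    (μ : ℝ) (hμ : 0 < μ) :
    (∃ C : ℝ, 0 < C ∧ ∃ δ₀ : ℝ, 0 < δ₀ ∧ ∀ δ : ℝ, 0 < δ → δ ≤ δ₀ →
        volume {t : ℝ | f t ≤ δ} ≤ ENNReal.ofReal (C * δ ^ μ)) ↔
    (∃ k : ℕ, Even k ∧ (k : ℝ) * μ ≤ 1 ∧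
        ∀ t : ℝ, 0 < ∑ j ∈ Finset.range (k + 1), |iteratedDeriv j f t|) := by
  have hfn : ∀ n : ℕ, ContDiff ℝ n f := fun n ↦ hf.of_le (by exact_mod_cast le_top)
  constructor
  · rintro ⟨C, -, δ₀, hδ₀, hvol⟩
    obtain ⟨k, hk, hkμ, hk2μ⟩ := exists_even_mul_le_one_lt_add_two_mul hμ
    refine ⟨k, hk, hkμ, fun t₀ ↦ sum_range_abs_pos_iff.mpr ?_⟩
    by_contra! hz
    exact hk2μ.not_ge <| add_two_mul_le_one_of_eventually_volume_sublevel_le (hfn _) hf0 hk hz <|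
      mem_of_superset (Ioc_mem_nhdsGT hδ₀) fun δ hδ ↦ hvol δ hδ.1 hδ.2
  · rintro ⟨k, -, hkμ, hpos⟩
    have hk : (k : ℝ) ≤ μ⁻¹ := by rwa [← one_div, le_div_iff₀ hμ]
    obtain ⟨C, hC, hvol⟩ := exists_volume_inter_abs_le_le_mul_rpow
      (isCompact_Icc (a := -R) (b := R)) (inv_pos.2 hμ) fun t _ ↦
        abs_sub_rpow_isBigO_of_exists_iteratedDeriv_ne_zero (hfn k)
          (sum_range_abs_pos_iff.mp (hpos t)) hk
    refine ⟨C, hC, c / 2, half_pos hc, fun δ hδ hδc ↦ ?_⟩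
    have hsub : {t | f t ≤ δ} ⊆ Icc (-R) R ∩ {t | |f t| ≤ δ} := fun t ht ↦ by
      have htR : |t| ≤ R := le_of_not_ge fun h ↦ by linarith [hinf t h, ht.out]
      exact ⟨abs_le.mp htR, (abs_of_nonneg (hf0 t)).trans_le ht⟩
    simpa only [inv_inv] using (measure_mono hsub).trans (hvol δ hδ.le)

/-- **Proposition A.1.** Let `f : ℝ → ℝ` be smooth with `f ≥ 0` and `f(t) ≥ c > 0` for
`|t| ≥ R`. Then, for `μ > 0`, the sublevel-set measure estimate
`|{t : f(t) ≤ δ}| ≤ C δ^μ` for small `δ` holds if and only if there is an even integer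
`k ≥ 0` with `kμ ≤ 1` such that `Σ_{j≤k} |f^{(j)}(t)| > 0` for every `t`. -/
theorem sublevel_measure_iff_finite_order
    (f : ℝ → ℝ) (hf : ContDiff ℝ (⊤ : ℕ∞) f) (hf0 : ∀ t, 0 ≤ f t)
    (c R : ℝ) (hc : 0 < c) (hR : 0 < R) (hinf : ∀ t : ℝ, R ≤ |t| → c ≤ f t)
    (μ : ℝ) (hμ : 0 < μ) :
    (∃ C : ℝ, 0 < C ∧ ∃ δ₀ : ℝ, 0 < δ₀ ∧ ∀ δ : ℝ, 0 < δ → δ ≤ δ₀ →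
        volume {t : ℝ | f t ≤ δ} ≤ ENNReal.ofReal (C * δ ^ μ)) ↔
    (∃ k : ℕ, Even k ∧ (k : ℝ) * μ ≤ 1 ∧
        ∀ t : ℝ, 0 < ∑ j ∈ Finset.range (k + 1), |iteratedDeriv j f t|) :=
  sublevel_measure_iff_finite_order_general f hf hf0 c R hc hinf μ hμ
end
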